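/- arXiv:2401.10200 — 2 statements merged into one kernel-verified Lean document; each statement's English description precedes it below -/
import Mathlib

section
/- Let m ≥ 1, let S ⊆ 𝔽₂^m be a subspace and Δ ∈ 𝔽₂^m ∖ S; let S_Δ be the subspace spanned by S and Δ (so S_Δ = S ∪ (S+Δ)), let Ŝ := (S_Δ)⊥, and let Δ̂ be any vector in S⊥ ∖ Ŝ. Then for all α, β ∈ ℂ: H^{⊗m}(α|Ŝ⟩ + β|Ŝ+Δ̂⟩) = ((α+β)/√2)|S⟩ + ((α−β)/√2)|S+Δ⟩. Equivalently, H^{⊗m} ∘ E_{Ŝ,Δ̂} = E_{S,Δ} ∘ H, where H is the single-qubit Hadamard gate. -/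
/-!
The Hadamard transform of a coset state `|T+a⟩` is the dual coset state `|T⊥⟩` with phases
`(−1)^{u·a}`: the character sum `∑_{t∈T} (−1)^{u·t}` equals `|T|` on `T⊥` and vanishes off it,
and `|T|·|T⊥| = 2^m`. For `T = Ŝ` we get `T⊥ = S_Δ = S ∪ (S+Δ)`, so `|S_Δ⟩ = (|S⟩ + |S+Δ⟩)/√2`,
and the phase `(−1)^{u·Δ̂}` is `+1` on `S` and `−1` on `S+Δ` because `Δ̂ ⊥ S` and `Δ̂·Δ = 1`.
-/

open scoped BigOperators

noncomputable section

attribute [local instance] Classical.propDecidable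

abbrev Fvec (n : ℕ) : Type := Fin n → ZMod 2

abbrev QSpace (n : ℕ) : Type := EuclideanSpace ℂ (Fvec n)

/-- The ±1 lift of a bit: `+1` if `b = 0` and `−1` if `b = 1`. -/
def sgn (b : ZMod 2) : ℂ := if b = 0 then 1 else -1

/-- The dot product over `𝔽₂`. -/
def dotp {n : ℕ} (x y : Fvec n) : ZMod 2 := ∑ i, x i * y i

/-- The orthogonal complement `T⊥ = {w : w·t = 0 for all t ∈ T}` with respect to the
`𝔽₂` dot product. -/
def dualSub {n : ℕ} (T : Submodule (ZMod 2) (Fvec n)) : Submodule (ZMod 2) (Fvec n) where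
  carrier := {w | ∀ t ∈ T, dotp w t = 0}
  add_mem' := by
    intro a b ha hb t ht
    have h : dotp (a + b) t = dotp a t + dotp b t := by
      simp [dotp, add_mul, Finset.sum_add_distrib]
    rw [h, ha t ht, hb t ht, add_zero]
  zero_mem' := by
    intro t ht
    simp [dotp]
  smul_mem' := by
    intro c a ha t ht
    have h : dotp (c • a) t = c * dotp a t := by
      simp [dotp, Finset.mul_sum, mul_assoc]
    rw [h, ha t ht, mul_zero]

/-- The normalized coset state `|T+a⟩ = |T|^{−1/2} ∑_{t ∈ T} |t+a⟩`
(note that `v = t + a` iff `v + a ∈ T`, as we are in characteristic two). -/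
def cosetState {n : ℕ} (T : Submodule (ZMod 2) (Fvec n)) (a : Fvec n) : QSpace n :=
  WithLp.toLp 2 (fun v => if v + a ∈ T then ((Real.sqrt (Nat.card ↥T) : ℂ))⁻¹ else 0)

/-- The subspace `S_Δ` spanned by `S` and `Δ`, i.e. `S ∪ (S + Δ)` when `Δ ∉ S`. -/
def extSpan {n : ℕ} (S : Submodule (ZMod 2) (Fvec n)) (Δ : Fvec n) :
    Submodule (ZMod 2) (Fvec n) :=
  S ⊔ Submodule.span (ZMod 2) {Δ}

/-- The `m`-qubit Hadamard `H^{⊗m}`, with matrix entries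
`⟨u|H^{⊗m}|v⟩ = 2^{−m/2} (−1)^{u·v}`. -/
def Had {n : ℕ} (ψ : QSpace n) : QSpace n :=
  WithLp.toLp 2 (fun u => (Real.sqrt (2 ^ n) : ℂ)⁻¹ * ∑ v, sgn (dotp u v) * ψ v)

lemma ZMod.eq_zero_or_eq_one (b : ZMod 2) : b = 0 ∨ b = 1 := by
  revert b; decide

lemma sgn_zero : sgn 0 = 1 := if_pos rfl

lemma sgn_one : sgn 1 = -1 := if_neg one_ne_zero

lemma sgn_add (a b : ZMod 2) : sgn (a + b) = sgn a * sgn b := by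
  rcases ZMod.eq_zero_or_eq_one a with rfl | rfl <;>
    rcases ZMod.eq_zero_or_eq_one b with rfl | rfl <;>
    simp [sgn_zero, sgn_one, ZModModule.add_self]

lemma sgn_eq_one_iff {b : ZMod 2} : sgn b = 1 ↔ b = 0 := by
  rcases ZMod.eq_zero_or_eq_one b with rfl | rfl <;> norm_num [sgn_zero, sgn_one]

section dotp

variable {n : ℕ}

lemma dotp_eq_dotProduct (x y : Fvec n) : dotp x y = x ⬝ᵥ y := rfl

lemma dotp_comm (x y : Fvec n) : dotp x y = dotp y x := dotProduct_comm x y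

lemma dotp_add_left (x y z : Fvec n) : dotp (x + y) z = dotp x z + dotp y z :=
  add_dotProduct x y z

lemma dotp_add_right (x y z : Fvec n) : dotp x (y + z) = dotp x y + dotp x z :=
  dotProduct_add x y z

lemma dotp_zero_left (x : Fvec n) : dotp 0 x = 0 := zero_dotProduct x

variable (n) in
def dotpForm : LinearMap.BilinForm (ZMod 2) (Fvec n) :=
  (1 : Matrix (Fin n) (Fin n) (ZMod 2)).toBilin'

variable (n) in
lemma dotpForm_nondegenerate : (dotpForm n).Nondegenerate :=
  LinearMap.BilinForm.nondegenerate_toBilin'_of_det_ne_zero' _ (by simp)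

variable (n) in
lemma dotpForm_isRefl : (dotpForm n).IsRefl := by
  intro x y h
  simpa [dotpForm, Matrix.toBilin'_apply', dotProduct_comm] using h

lemma dualSub_eq_orthogonal (T : Submodule (ZMod 2) (Fvec n)) :
    dualSub T = (dotpForm n).orthogonal T := by
  ext w
  simp [dualSub, dotpForm, Matrix.toBilin'_apply', dotp_eq_dotProduct, dotProduct_comm]

lemma dualSub_dualSub (T : Submodule (ZMod 2) (Fvec n)) : dualSub (dualSub T) = T := by
  simp only [dualSub_eq_orthogonal]
  exact LinearMap.BilinForm.orthogonal_orthogonal (dotpForm_nondegenerate n) (dotpForm_isRefl n) T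

lemma natCard_eq_two_pow_finrank (T : Submodule (ZMod 2) (Fvec n)) :
    Nat.card T = 2 ^ Module.finrank (ZMod 2) T := by
  rw [Module.natCard_eq_pow_finrank (K := ZMod 2), Nat.card_zmod]

lemma natCard_mul_natCard_dualSub (T : Submodule (ZMod 2) (Fvec n)) :
    Nat.card T * Nat.card (dualSub T) = 2 ^ n := by
  rw [natCard_eq_two_pow_finrank, natCard_eq_two_pow_finrank, dualSub_eq_orthogonal,
    LinearMap.BilinForm.finrank_orthogonal (dotpForm_nondegenerate n), ← pow_add,
    Module.finrank_fin_fun, Nat.add_sub_cancel' (by simpa using T.finrank_le)]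

end dotp

section coset

variable {n : ℕ}

lemma sum_sgn_dotp (T : Submodule (ZMod 2) (Fvec n)) (u : Fvec n) :
    ∑ t : T, sgn (dotp u t) = if u ∈ dualSub T then (Nat.card T : ℂ) else 0 := by
  let ψ : AddChar T ℂ :=
    { toFun t := sgn (dotp u t)
      map_zero_eq_one' := by simp [dotp, sgn_zero]
      map_add_eq_mul' s t := by simp [dotp_add_right, sgn_add] }
  have hψ : ψ = 0 ↔ u ∈ dualSub T := by
    simp [AddChar.eq_zero_iff, ψ, sgn_eq_one_iff, dualSub, dotp_comm u]
  simp_rw [← hψ, Nat.card_eq_fintype_card]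
  exact AddChar.sum_eq_ite ψ

lemma sum_sgn_dotp_mul_cosetState (T : Submodule (ZMod 2) (Fvec n)) (a u : Fvec n) :
    ∑ v, sgn (dotp u v) * cosetState T a v
      = sgn (dotp u a) * (Real.sqrt (Nat.card T) : ℂ)⁻¹ * ∑ t : T, sgn (dotp u t) := by
  rw [← Equiv.sum_comp (Equiv.addRight a), Finset.mul_sum,
    ← Finset.sum_subtype (Finset.univ.filter (· ∈ T)) (by simp)
      (fun v => sgn (dotp u a) * (Real.sqrt (Nat.card T) : ℂ)⁻¹ * sgn (dotp u v)),
    Finset.sum_filter]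
  refine Finset.sum_congr rfl fun v _ => ?_
  by_cases hv : v ∈ T
  · simp only [cosetState, Equiv.coe_addRight, WithLp.ofLp_toLp, add_assoc, ZModModule.add_self,
      add_zero, hv, if_true, dotp_add_right, sgn_add]
    ring
  · simp [cosetState, hv, add_assoc, ZModModule.add_self]

lemma Had_cosetState_apply (T : Submodule (ZMod 2) (Fvec n)) (a u : Fvec n) :
    Had (cosetState T a) u = sgn (dotp u a) * cosetState (dualSub T) 0 u := by
  have hT : (0 : ℝ) < Real.sqrt (Nat.card T) := Real.sqrt_pos.2 (Nat.cast_pos.2 Nat.card_pos)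
  have hT' : (0 : ℝ) < Real.sqrt (Nat.card (dualSub T)) :=
    Real.sqrt_pos.2 (Nat.cast_pos.2 Nat.card_pos)
  have h2n : Real.sqrt (2 ^ n) = Real.sqrt (Nat.card T) * Real.sqrt (Nat.card (dualSub T)) := by
    rw [← Real.sqrt_mul (Nat.cast_nonneg _), ← Nat.cast_mul, natCard_mul_natCard_dualSub]
    push_cast
    rfl
  have hcard : (Nat.card T : ℂ) = Real.sqrt (Nat.card T) * Real.sqrt (Nat.card T) := by
    exact_mod_cast (Real.mul_self_sqrt (Nat.cast_nonneg _)).symm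
  simp only [Had, WithLp.ofLp_toLp, sum_sgn_dotp_mul_cosetState, sum_sgn_dotp]
  by_cases hu : u ∈ dualSub T
  · simp only [cosetState, hu, if_true, add_zero, h2n, hcard, WithLp.ofLp_toLp]
    push_cast
    field_simp
  · simp [cosetState, hu]

lemma Had_add (ψ φ : QSpace n) : Had (ψ + φ) = Had ψ + Had φ := by
  ext u
  simp [Had, mul_add, Finset.sum_add_distrib]

lemma Had_smul (c : ℂ) (ψ : QSpace n) : Had (c • ψ) = c • Had ψ := by
  ext u
  simp [Had, Finset.mul_sum, mul_left_comm]

lemma sgn_dotp_mul_cosetState {S : Submodule (ZMod 2) (Fvec n)} {w : Fvec n}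
    (hw : w ∈ dualSub S) (a u : Fvec n) :
    sgn (dotp u w) * cosetState S a u = sgn (dotp a w) * cosetState S a u := by
  by_cases hu : u + a ∈ S
  · have h := hw _ hu
    rw [dotp_comm, dotp_add_left, ← ZModModule.sub_eq_add, sub_eq_zero] at h
    rw [h]
  · simp [cosetState, hu]

lemma mem_extSpan_iff {S : Submodule (ZMod 2) (Fvec n)} {Δ u : Fvec n} :
    u ∈ extSpan S Δ ↔ u ∈ S ∨ u + Δ ∈ S := by
  simp only [extSpan, Submodule.mem_sup, Submodule.mem_span_singleton]
  constructor
  · rintro ⟨s, hs, _, ⟨c, rfl⟩, rfl⟩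
    rcases ZMod.eq_zero_or_eq_one c with rfl | rfl
    · simpa using Or.inl hs
    · simpa [add_assoc, ZModModule.add_self] using Or.inr hs
  · rintro (hu | hu)
    · exact ⟨u, hu, 0, ⟨0, zero_smul _ _⟩, add_zero u⟩
    · exact ⟨u + Δ, hu, Δ, ⟨1, one_smul _ _⟩, by rw [add_assoc, ZModModule.add_self, add_zero]⟩

lemma natCard_extSpan {S : Submodule (ZMod 2) (Fvec n)} {Δ : Fvec n} (hΔ : Δ ∉ S) :
    Nat.card (extSpan S Δ) = 2 * Nat.card S := by
  rw [natCard_eq_two_pow_finrank, natCard_eq_two_pow_finrank, extSpan,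
    Submodule.finrank_sup_span_singleton hΔ, pow_succ, mul_comm]

lemma cosetState_extSpan_apply {S : Submodule (ZMod 2) (Fvec n)} {Δ : Fvec n}
    (hΔ : Δ ∉ S) (u : Fvec n) :
    cosetState (extSpan S Δ) 0 u
      = (Real.sqrt 2 : ℂ)⁻¹ * (cosetState S 0 u + cosetState S Δ u) := by
  have hdisj : ¬ (u ∈ S ∧ u + Δ ∈ S) := fun ⟨h₁, h₂⟩ => hΔ (by
    simpa [← add_assoc, ZModModule.add_self] using S.add_mem h₁ h₂)
  simp only [cosetState, WithLp.ofLp_toLp, add_zero, natCard_extSpan hΔ, Nat.cast_mul,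
    Nat.cast_two, Real.sqrt_mul zero_le_two]
  rw [mem_extSpan_iff]
  push_cast
  by_cases h₁ : u ∈ S <;> by_cases h₂ : u + Δ ∈ S <;> simp_all [mul_comm]

lemma dotp_eq_one_of_notMem_dualSub_extSpan {S : Submodule (ZMod 2) (Fvec n)}
    {Δ w : Fvec n} (hw : w ∈ dualSub S) (hw' : w ∉ dualSub (extSpan S Δ)) : dotp Δ w = 1 := by
  refine (ZMod.eq_zero_or_eq_one _).resolve_left fun h => hw' fun t ht => ?_
  rcases mem_extSpan_iff.1 ht with ht | ht
  · exact hw t ht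
  · simpa [dotp_add_right, dotp_comm w Δ, h] using hw _ ht

end coset

theorem hadamard_of_dual_coset_states_general
    {m : ℕ}
    (S : Submodule (ZMod 2) (Fvec m)) (Δ : Fvec m) (hΔ : Δ ∉ S)
    (Δhat : Fvec m) (hΔhat₁ : Δhat ∈ dualSub S) (hΔhat₂ : Δhat ∉ dualSub (extSpan S Δ))
    (α β : ℂ) :
    Had (α • cosetState (dualSub (extSpan S Δ)) 0 + β • cosetState (dualSub (extSpan S Δ)) Δhat)
      = ((α + β) / (Real.sqrt 2 : ℂ)) • cosetState S 0
        + ((α - β) / (Real.sqrt 2 : ℂ)) • cosetState S Δ := by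
  ext u
  have h₀ := sgn_dotp_mul_cosetState hΔhat₁ 0 u
  have h₁ := sgn_dotp_mul_cosetState hΔhat₁ Δ u
  rw [dotp_zero_left, sgn_zero] at h₀
  rw [dotp_eq_one_of_notMem_dualSub_extSpan hΔhat₁ hΔhat₂, sgn_one] at h₁
  simp only [Had_add, Had_smul, PiLp.add_apply, PiLp.smul_apply, smul_eq_mul,
    Had_cosetState_apply, dualSub_dualSub, cosetState_extSpan_apply hΔ, dotp_comm _ (0 : Fvec m),
    dotp_zero_left, sgn_zero]
  linear_combination (β / Real.sqrt 2) * (h₀ + h₁)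

/-- Let `S ⊆ 𝔽₂^m` be a subspace, `Δ ∉ S`, `S_Δ := span(S, Δ)`, `Ŝ := (S_Δ)⊥`, and let
`Δ̂ ∈ S⊥ ∖ Ŝ`.  Then for all `α, β ∈ ℂ`:
`H^{⊗m}(α|Ŝ⟩ + β|Ŝ+Δ̂⟩) = ((α+β)/√2)|S⟩ + ((α−β)/√2)|S+Δ⟩`. -/
theorem hadamard_of_dual_coset_states
    {m : ℕ} (hm : 1 ≤ m)
    (S : Submodule (ZMod 2) (Fvec m)) (Δ : Fvec m) (hΔ : Δ ∉ S)
    (Δhat : Fvec m) (hΔhat₁ : Δhat ∈ dualSub S) (hΔhat₂ : Δhat ∉ dualSub (extSpan S Δ))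
    (α β : ℂ) :
    Had (α • cosetState (dualSub (extSpan S Δ)) 0 + β • cosetState (dualSub (extSpan S Δ)) Δhat)
      = ((α + β) / (Real.sqrt 2 : ℂ)) • cosetState S 0
        + ((α - β) / (Real.sqrt 2 : ℂ)) • cosetState S Δ :=
  hadamard_of_dual_coset_states_general S Δ hΔ Δhat hΔhat₁ hΔhat₂ α β
end
end

section
/- Let m, n ≥ 1, let S ⊆ 𝔽₂^m be a subspace and Δ ∈ 𝔽₂^m ∖ S, let x = (x₁, …, x_n) and z = (z₁, …, z_n) ∈ (𝔽₂^m)ⁿ, and let ψ ∈ ℂ[𝔽₂ⁿ]. Then for every μ ∈ 𝔽₂ⁿ: ∑_{c = (c₁,…,c_n) with cᵢ ∈ S + μᵢΔ + xᵢ for all i} |⟨c| (X^{x₁}Z^{z₁} ⊗ ⋯ ⊗ X^{x_n}Z^{z_n}) E_{S,Δ}^{⊗n} ψ⟩|² = |ψ(μ)|². In words: measuring the authenticated state X^xZ^z E_{S,Δ}^{⊗n}ψ in the standard basis yields, with probability |ψ(μ)|², a tuple of vectors lying in the product coset ∏ᵢ (S + μᵢΔ + xᵢ), which classically decodes to μ.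 -/
/-!
The standard-basis case of the correctness of the publicly-verifiable authentication
scheme of "Quantum State Obfuscation from Classical Oracles": measuring the
authenticated state `X^x Z^z E_{S,Δ}^{⊗n} ψ` in the standard basis yields, with
probability `|ψ(μ)|²`, a tuple of vectors in the product coset `∏ᵢ (S + μᵢΔ + xᵢ)`,
which classically decodes to `μ`.
-/

open scoped BigOperators

noncomputable section

attribute [local instance] Classical.propDecidable

/-- The `n`-register code space `ℂ[(𝔽₂^m)ⁿ]`. -/
abbrev QSpaceN (m n : ℕ) : Type := EuclideanSpace ℂ (Fin n → Fvec m)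

/-- The authenticated (encoded-and-encrypted) state `X^x Z^z E_{S,Δ}^{⊗n} ψ`, where
`E_{S,Δ}|0⟩ = |S⟩`, `E_{S,Δ}|1⟩ = |S+Δ⟩` acts qubit-wise and `X^{x_i} Z^{z_i}` is
applied to the `i`-th register. -/
def encState {m n : ℕ} (S : Submodule (ZMod 2) (Fvec m)) (Δ : Fvec m)
    (x z : Fin n → Fvec m) (ψ : QSpace n) : QSpaceN m n :=
  WithLp.toLp 2 (fun c => ∑ μ : Fvec n, ψ μ *
    ∏ i, (sgn (dotp (z i) (c i + x i)) * cosetState S (μ i • Δ) (c i + x i)))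

/-!
On the product coset `∏ᵢ (S + μᵢΔ + xᵢ)` only the `μ`-term of the superposition survives,
because `Δ ∉ S` makes the cosets `S` and `S + Δ` disjoint. The surviving amplitude is
`ψ(μ)` times `n` signs times `|S|^{-n/2}`, and the product coset has `|S|^n` points.
-/

theorem Submodule.eq_of_add_smul_mem_of_add_smul_mem {K M : Type*} [Field K] [AddCommGroup M]
    [Module K M] {S : Submodule K M} {Δ v : M} (hΔ : Δ ∉ S) {a b : K}
    (ha : v + a • Δ ∈ S) (hb : v + b • Δ ∈ S) : a = b := by
  by_contra hab
  have hmem : (a - b) • Δ ∈ S := by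
    simpa [sub_smul] using S.sub_mem ha hb
  exact hΔ ((S.smul_mem_iff (sub_ne_zero.mpr hab)).mp hmem)

theorem card_filter_add_mem {G T : Type*} [AddGroup G] [Fintype G] [SetLike T G]
    [AddSubgroupClass T G] (t : T) (a : G) :
    (Finset.univ.filter fun v : G => v + a ∈ t).card = Nat.card t := by
  rw [← Fintype.card_subtype, Nat.card_eq_fintype_card]
  exact Fintype.card_congr ((Equiv.addRight a).subtypeEquiv fun _ => Iff.rfl)

theorem card_filter_forall_add_mem {ι G T : Type*} [Fintype ι] [DecidableEq ι]
    [AddGroup G] [Fintype G] [SetLike T G] [AddSubgroupClass T G] (t : T) (a : ι → G) :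
    (Finset.univ.filter fun c : ι → G => ∀ i, c i + a i ∈ t).card
      = Nat.card t ^ Fintype.card ι := by
  have hpi : (Finset.univ.filter fun c : ι → G => ∀ i, c i + a i ∈ t)
      = Fintype.piFinset fun i => Finset.univ.filter fun v : G => v + a i ∈ t := by
    ext c
    simp [Fintype.mem_piFinset]
  simp [hpi, Fintype.card_piFinset, card_filter_add_mem t]

theorem norm_sgn (b : ZMod 2) : ‖sgn b‖ = 1 := by
  unfold sgn; split <;> simp

theorem encState_apply_of_forall_mem {m n : ℕ} {S : Submodule (ZMod 2) (Fvec m)} {Δ : Fvec m}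
    (hΔ : Δ ∉ S) (x z : Fin n → Fvec m) (ψ : QSpace n) {μ : Fvec n} {c : Fin n → Fvec m}
    (hc : ∀ i, c i + μ i • Δ + x i ∈ S) :
    encState S Δ x z ψ c
      = ψ μ * ∏ i, (sgn (dotp (z i) (c i + x i)) * ((Real.sqrt (Nat.card S) : ℂ))⁻¹) := by
  have hc' : ∀ i, c i + x i + μ i • Δ ∈ S := fun i => add_right_comm (c i) (x i) _ ▸ hc i
  rw [encState, PiLp.toLp_apply, Finset.sum_eq_single μ]
  · simp only [cosetState, PiLp.toLp_apply, if_pos (hc' _)]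
  · intro ν _ hν
    obtain ⟨i, hi⟩ := Function.ne_iff.mp hν
    have hzero : cosetState S (ν i • Δ) (c i + x i) = 0 :=
      if_neg fun h => hi (S.eq_of_add_smul_mem_of_add_smul_mem hΔ h (hc' i))
    rw [Finset.prod_eq_zero (Finset.mem_univ i) (by rw [hzero, mul_zero]), mul_zero]
  · simp

theorem norm_encState_sq_of_forall_mem {m n : ℕ} {S : Submodule (ZMod 2) (Fvec m)}
    {Δ : Fvec m} (hΔ : Δ ∉ S) (x z : Fin n → Fvec m) (ψ : QSpace n) {μ : Fvec n}
    {c : Fin n → Fvec m} (hc : ∀ i, c i + μ i • Δ + x i ∈ S) :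
    ‖encState S Δ x z ψ c‖ ^ 2 = ‖ψ μ‖ ^ 2 * ((Nat.card S : ℝ)⁻¹) ^ n := by
  rw [encState_apply_of_forall_mem hΔ x z ψ hc, norm_mul, mul_pow, norm_prod,
    ← Finset.prod_pow]
  simp [norm_sgn]

theorem standard_basis_measurement_of_authenticated_state_general
    {m n : ℕ}
    (S : Submodule (ZMod 2) (Fvec m)) (Δ : Fvec m) (hΔ : Δ ∉ S)
    (x z : Fin n → Fvec m) (ψ : QSpace n) (μ : Fvec n) :
    ∑ c : Fin n → Fvec m,
      (if ∀ i, c i + (μ i • Δ) + x i ∈ S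
        then ‖encState S Δ x z ψ c‖ ^ 2 else 0)
      = ‖ψ μ‖ ^ 2 := by
  have hcard := card_filter_forall_add_mem S fun i => μ i • Δ + x i
  simp only [← add_assoc, Fintype.card_fin] at hcard
  have hK : (Nat.card S : ℝ) ≠ 0 := Nat.cast_ne_zero.mpr Nat.card_pos.ne'
  rw [← Finset.sum_filter, Finset.sum_congr rfl fun c hc =>
      norm_encState_sq_of_forall_mem hΔ x z ψ (Finset.mem_filter.mp hc).2,
    Finset.sum_const, hcard, nsmul_eq_mul, Nat.cast_pow, mul_left_comm, ← mul_pow,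
    mul_inv_cancel₀ hK, one_pow, mul_one]

/-- For every subspace `S ⊆ 𝔽₂^m`, `Δ ∉ S`, one-time-pad keys `x, z ∈ (𝔽₂^m)ⁿ`,
state `ψ ∈ ℂ[𝔽₂ⁿ]`, and outcome `μ ∈ 𝔽₂ⁿ`:
`∑_{c : ∀ i, cᵢ ∈ S + μᵢΔ + xᵢ} |⟨c| X^x Z^z E_{S,Δ}^{⊗n} ψ⟩|² = |ψ(μ)|²`
(note `cᵢ ∈ S + μᵢΔ + xᵢ` iff `cᵢ + μᵢΔ + xᵢ ∈ S`, as we are in characteristic two). -/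
theorem standard_basis_measurement_of_authenticated_state
    {m n : ℕ} (hm : 1 ≤ m) (hn : 1 ≤ n)
    (S : Submodule (ZMod 2) (Fvec m)) (Δ : Fvec m) (hΔ : Δ ∉ S)
    (x z : Fin n → Fvec m) (ψ : QSpace n) (μ : Fvec n) :
    ∑ c : Fin n → Fvec m,
      (if ∀ i, c i + (μ i • Δ) + x i ∈ S
        then ‖encState S Δ x z ψ c‖ ^ 2 else 0)
      = ‖ψ μ‖ ^ 2 :=
  standard_basis_measurement_of_authenticated_state_general S Δ hΔ x z ψ μ
end
end
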